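/- arXiv:1510.01800 — 2 statements merged into one kernel-verified Lean document; each statement's English description precedes it below -/
import Mathlib

section
/- Let (X_t)_{t≥1} be a sequence of random variables with values in [0,1], adapted to a filtration (F_t), and suppose there is ε > 0 such that E[X_t | F_{t-1}] ≥ ε for all t. Let B ≥ 0 and define the stopping time τ = min{t : X_1 + ... + X_t > B}. Then E[τ] ≤ (B+1)/ε. -/
/-!
Let `S t = X 1 + ⋯ + X t` and `D t = {S t ≤ B} ∈ ℱ t`. Since `S t ≤ B` for every `t < τ`,
`E[τ] ≤ ∑ₜ P(D t)`. Along every path the increments `X (t + 1)` over the rounds `t` with `S t ≤ B`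
add up to at most `B + 1`, while by the drift condition `ε P(D t) ≤ E[X (t + 1); D t]`, because
`D t` is `ℱ t`-measurable. Summing gives `ε ∑ₜ P(D t) ≤ B + 1`.
-/

open MeasureTheory ENNReal

section Deterministic

variable {x : ℕ → ℝ} {B : ℝ}

lemma sum_Icc_one_succ (x : ℕ → ℝ) (t : ℕ) :
    ∑ s ∈ Finset.Icc 1 (t + 1), x s = ∑ s ∈ Finset.Icc 1 t, x s + x (t + 1) :=
  Finset.sum_Icc_succ_top (Nat.le_add_left 1 t) x

lemma sum_increments_within_budget_le (hx : ∀ t, 1 ≤ t → x t ∈ Set.Icc (0 : ℝ) 1) (hB : 0 ≤ B)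
    (n : ℕ) :
    ∑ t ∈ Finset.range n, (if ∑ s ∈ Finset.Icc 1 t, x s ≤ B then x (t + 1) else 0) ≤ B + 1 := by
  -- the sum is also bounded by the partial sum `S n`, which makes the induction go through
  suffices h : ∀ n, ∑ t ∈ Finset.range n, (if ∑ s ∈ Finset.Icc 1 t, x s ≤ B then x (t + 1) else 0)
      ≤ min (∑ s ∈ Finset.Icc 1 n, x s) (B + 1) from (h n).trans (min_le_right _ _)
  intro n
  induction n with
  | zero =>
    simp only [Finset.range_zero, Finset.sum_empty, Finset.Icc_eq_empty_of_lt zero_lt_one,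
      le_min_iff]
    constructor <;> linarith
  | succ n ih =>
    obtain ⟨hx₀, hx₁⟩ := hx (n + 1) (Nat.le_add_left 1 n)
    rw [Finset.sum_range_succ, sum_Icc_one_succ, le_min_iff] at *
    split_ifs with h
    · constructor <;> linarith [ih.1]
    · constructor <;> linarith [ih.1, ih.2]

lemma sum_Icc_one_le_of_lt_sInf (hB : 0 ≤ B) {t : ℕ}
    (ht : t < sInf {t : ℕ | 1 ≤ t ∧ B < ∑ s ∈ Finset.Icc 1 t, x s}) :
    ∑ s ∈ Finset.Icc 1 t, x s ≤ B := by
  by_contra! hexceed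
  rcases Nat.eq_zero_or_pos t with rfl | ht₁
  · simp only [Finset.Icc_eq_empty_of_lt zero_lt_one, Finset.sum_empty] at hexceed
    linarith
  · exact (Nat.sInf_le (show t ∈ {t : ℕ | 1 ≤ t ∧ B < ∑ s ∈ Finset.Icc 1 t, x s} from
      ⟨ht₁, hexceed⟩)).not_gt ht

end Deterministic

lemma lintegral_natCast_le_tsum_measure {Ω : Type*} [MeasurableSpace Ω] {μ : Measure Ω}
    {N : Ω → ℕ} {D : ℕ → Set Ω} (hD : ∀ t, MeasurableSet (D t))
    (hND : ∀ ω, ∀ t < N ω, ω ∈ D t) :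
    ∫⁻ ω, (N ω : ℝ≥0∞) ∂μ ≤ ∑' t, μ (D t) := by
  have hpointwise : ∀ ω, (N ω : ℝ≥0∞) ≤ ∑' t, (D t).indicator 1 ω := fun ω =>
    calc (N ω : ℝ≥0∞) = ∑ t ∈ Finset.range (N ω), (D t).indicator 1 ω := by
          rw [Finset.sum_congr rfl fun t ht =>
            Set.indicator_of_mem (hND ω t (Finset.mem_range.mp ht)) _]
          simp
      _ ≤ ∑' t, (D t).indicator 1 ω := ENNReal.sum_le_tsum _
  calc ∫⁻ ω, (N ω : ℝ≥0∞) ∂μ ≤ ∫⁻ ω, ∑' t, (D t).indicator 1 ω ∂μ := lintegral_mono hpointwise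
    _ = ∑' t, μ (D t) := by
        rw [lintegral_tsum fun t => (measurable_one.indicator (hD t)).aemeasurable]
        exact tsum_congr fun t => lintegral_indicator_one (hD t)

lemma mul_measureReal_le_setIntegral_of_le_condExp {Ω : Type*} {m m₀ : MeasurableSpace Ω}
    {μ : Measure Ω} [IsFiniteMeasure μ] (hm : m ≤ m₀) {f : Ω → ℝ} {A : Set Ω} {c : ℝ}
    (hf : Integrable f μ) (hA : MeasurableSet[m] A) (hc : ∀ᵐ ω ∂μ, c ≤ μ[f | m] ω) :
    c * μ.real A ≤ ∫ ω in A, f ω ∂μ := by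
  rw [← setIntegral_condExp hm hf hA, mul_comm, ← smul_eq_mul, ← setIntegral_const]
  exact setIntegral_mono_ae (integrableOn_const (measure_ne_top μ _))
    integrable_condExp.integrableOn hc

lemma mul_sum_measureReal_within_budget_le {Ω : Type*} {m : MeasurableSpace Ω} {μ : Measure Ω}
    [IsProbabilityMeasure μ] {ℱ : Filtration ℕ m} {X : ℕ → Ω → ℝ} (hadapted : Adapted ℱ X)
    (hbound : ∀ t ω, 1 ≤ t → X t ω ∈ Set.Icc (0 : ℝ) 1) {ε : ℝ}
    (hcond : ∀ t, 1 ≤ t → ∀ᵐ ω ∂μ, ε ≤ (μ[X t | ℱ (t - 1)]) ω) {B : ℝ} (hB : 0 ≤ B) (n : ℕ) :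
    ε * ∑ t ∈ Finset.range n, μ.real {ω | ∑ s ∈ Finset.Icc 1 t, X s ω ≤ B} ≤ B + 1 := by
  set D : ℕ → Set Ω := fun t => {ω | ∑ s ∈ Finset.Icc 1 t, X s ω ≤ B}
  have hD : ∀ t, MeasurableSet[ℱ t] (D t) := fun t =>
    measurableSet_le (Finset.measurable_sum _ fun s hs =>
      (hadapted s).mono (ℱ.mono (Finset.mem_Icc.mp hs).2) le_rfl) measurable_const
  have hXint : ∀ t, Integrable (X (t + 1)) μ := fun t =>
    Integrable.of_bound ((hadapted _).mono (ℱ.le _) le_rfl).aestronglyMeasurable 1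
      (ae_of_all _ fun ω => by
        obtain ⟨h₀, h₁⟩ := hbound (t + 1) ω (Nat.le_add_left 1 t)
        rw [Real.norm_eq_abs, abs_le]
        exact ⟨by linarith, h₁⟩)
  have hind : ∀ t, Integrable ((D t).indicator (X (t + 1))) μ := fun t =>
    (hXint t).indicator (ℱ.le t _ (hD t))
  rw [Finset.mul_sum]
  calc ∑ t ∈ Finset.range n, ε * μ.real (D t)
      ≤ ∑ t ∈ Finset.range n, ∫ ω in D t, X (t + 1) ω ∂μ :=
        Finset.sum_le_sum fun t _ => mul_measureReal_le_setIntegral_of_le_condExp (ℱ.le t)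
          (hXint t) (hD t) (by simpa using hcond (t + 1) (Nat.le_add_left 1 t))
    _ = ∫ ω, ∑ t ∈ Finset.range n, (D t).indicator (X (t + 1)) ω ∂μ := by
        rw [integral_finsetSum _ fun t _ => hind t]
        exact Finset.sum_congr rfl fun t _ => (integral_indicator (ℱ.le t _ (hD t))).symm
    _ ≤ ∫ _, B + 1 ∂μ := by
        refine integral_mono (integrable_finsetSum _ fun t _ => hind t) (integrable_const _)
          fun ω => ?_
        simpa only [Set.indicator_apply, D, Set.mem_ofPred_eq] using
          sum_increments_within_budget_le (fun t ht => hbound t ω ht) hB n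
    _ = B + 1 := by simp

theorem stmt_0 {Ω : Type*} {m : MeasurableSpace Ω} {μ : Measure Ω} [IsProbabilityMeasure μ]
    (ℱ : Filtration ℕ m) (X : ℕ → Ω → ℝ) (hadapted : Adapted ℱ X)
    (hbound : ∀ t ω, 1 ≤ t → X t ω ∈ Set.Icc (0 : ℝ) 1)
    (ε : ℝ) (hε : 0 < ε)
    (hcond : ∀ t, 1 ≤ t → ∀ᵐ ω ∂μ, ε ≤ (μ[X t | ℱ (t - 1)]) ω)
    (B : ℝ) (hB : 0 ≤ B)
    (τ : Ω → ℕ)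
    (hτ : ∀ ω, τ ω = sInf {t : ℕ | 1 ≤ t ∧ B < ∑ s ∈ Finset.Icc 1 t, X s ω}) :
    ∫⁻ ω, (τ ω : ℝ≥0∞) ∂μ ≤ ENNReal.ofReal ((B + 1) / ε) := by
  set D : ℕ → Set Ω := fun t => {ω | ∑ s ∈ Finset.Icc 1 t, X s ω ≤ B}
  have hD : ∀ t, MeasurableSet (D t) := fun t =>
    measurableSet_le (Finset.measurable_sum _ fun s _ => (hadapted s).mono (ℱ.le s) le_rfl)
      measurable_const
  calc ∫⁻ ω, (τ ω : ℝ≥0∞) ∂μ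
      ≤ ∑' t, μ (D t) := lintegral_natCast_le_tsum_measure hD fun ω t ht =>
        sum_Icc_one_le_of_lt_sInf hB (hτ ω ▸ ht)
    _ ≤ ENNReal.ofReal ((B + 1) / ε) := by
        refine ENNReal.tsum_le_of_sum_range_le fun n => ?_
        rw [← Finset.sum_congr rfl fun t _ => ofReal_measureReal,
          ← ENNReal.ofReal_sum_of_nonneg fun t _ => measureReal_nonneg]
        exact ENNReal.ofReal_le_ofReal ((le_div_iff₀' hε).mpr
          (mul_sum_measureReal_within_budget_le hadapted hbound hcond hB n))
end

section
/- Let K be a finite set of size ρ ≥ 1 and (ξ_k)_{k∈K} nonnegative reals with S = Σ ξ_k > 0. Consider a sequence of counter vectors (n_k(t))_{k∈K} with n_k(0) = 0, where at each step t exactly one coordinate is incremented by 1, and the incremented coordinate k always satisfies n_k(t) ≤ t · ξ_k / S (such a coordinate always exists). Then for every time t and every k ∈ K: t · ξ_k / S − ρ ≤ n_k(t) ≤ t · ξ_k / S + 1. -/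
/-!
A counter that only moves up by one, and only while it is at or below a nondecreasing target,
overshoots the target by at most one. Since the counters over `K` sum to `t` and so do the
targets `t ξ_k / S`, a deficit in one coordinate is paid for by surpluses of at most one in
each of the other `ρ - 1` coordinates.
-/

open Finset

theorem le_add_one_of_increments_below (c : ℕ → ℕ) (f : ℕ → ℝ) (hf : Monotone f)
    (h0 : (c 0 : ℝ) ≤ f 0 + 1)
    (hstep : ∀ t, c (t + 1) = c t ∨ ((c t : ℝ) ≤ f t ∧ c (t + 1) = c t + 1)) :
    ∀ t, (c t : ℝ) ≤ f t + 1 := by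
  intro t
  induction t with
  | zero => exact h0
  | succ t ih =>
    have hft : f t ≤ f (t + 1) := hf t.le_succ
    rcases hstep t with hstay | ⟨hbelow, hincr⟩
    · rw [hstay]; linarith
    · rw [hincr]; push_cast; linarith

theorem sum_eq_of_increments_one {ι : Type*} (K : Finset ι) (n : ℕ → ι → ℕ)
    (h0 : ∀ k ∈ K, n 0 k = 0)
    (hstep : ∀ t, ∃ k ∈ K, n (t + 1) k = n t k + 1 ∧ ∀ l, l ≠ k → n (t + 1) l = n t l) :
    ∀ t, ∑ l ∈ K, n t l = t := by
  classical
  intro t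
  induction t with
  | zero => exact sum_eq_zero h0
  | succ t ih =>
    obtain ⟨k, hk, hincr, hrest⟩ := hstep t
    have hnext : ∀ l ∈ K, n (t + 1) l = n t l + if l = k then 1 else 0 := by
      intro l _
      by_cases hl : l = k
      · simp [hl, hincr]
      · simp [hl, hrest l hl]
    rw [sum_congr rfl hnext, sum_add_distrib, sum_ite_eq' K k, if_pos hk, ih]

theorem sub_card_sub_one_mul_le_of_sum_eq {ι : Type*} (K : Finset ι) (x y : ι → ℝ) (c : ℝ)
    (hle : ∀ l ∈ K, x l ≤ y l + c) (hsum : ∑ l ∈ K, x l = ∑ l ∈ K, y l)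
    {k : ι} (hk : k ∈ K) :
    y k - ((K.card : ℝ) - 1) * c ≤ x k := by
  classical
  have hothers : ∑ l ∈ K.erase k, x l ≤ ∑ l ∈ K.erase k, y l + ((K.card : ℝ) - 1) * c := by
    calc ∑ l ∈ K.erase k, x l ≤ ∑ l ∈ K.erase k, (y l + c) :=
          sum_le_sum fun l hl => hle l (mem_of_mem_erase hl)
      _ = ∑ l ∈ K.erase k, y l + ((K.card : ℝ) - 1) * c := by
          rw [sum_add_distrib, sum_const, card_erase_of_mem hk, nsmul_eq_mul,
            Nat.cast_pred (card_pos.mpr ⟨k, hk⟩)]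
  have hx := add_sum_erase K x hk
  have hy := add_sum_erase K y hk
  linarith

theorem stmt_3_general {ι : Type*} (K : Finset ι) (ρ : ℕ) (hcard : K.card = ρ)
    (ξ : ι → ℝ) (hξ : ∀ k ∈ K, 0 ≤ ξ k)
    (S : ℝ) (hS : S = ∑ k ∈ K, ξ k) (hSpos : 0 < S)
    (n : ℕ → ι → ℕ) (h0 : ∀ k, n 0 k = 0)
    (hstep : ∀ t : ℕ, ∃ k ∈ K, (n t k : ℝ) ≤ (t : ℝ) * ξ k / S ∧
      n (t + 1) k = n t k + 1 ∧ ∀ l, l ≠ k → n (t + 1) l = n t l) :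
    ∀ t : ℕ, ∀ k ∈ K, (t : ℝ) * ξ k / S - ρ ≤ n t k ∧ (n t k : ℝ) ≤ (t : ℝ) * ξ k / S + 1 := by
  have upper : ∀ t, ∀ k ∈ K, (n t k : ℝ) ≤ (t : ℝ) * ξ k / S + 1 := by
    intro t k hk
    refine le_add_one_of_increments_below (n · k) (fun t => (t : ℝ) * ξ k / S) ?_ (by simp [h0])
      (fun t => ?_) t
    · exact fun a b hab => div_le_div_of_nonneg_right
        (mul_le_mul_of_nonneg_right (Nat.cast_le.mpr hab) (hξ k hk)) hSpos.le
    · obtain ⟨k₀, -, hbelow, hincr, hrest⟩ := hstep t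
      by_cases hkk₀ : k = k₀
      · subst hkk₀; exact Or.inr ⟨hbelow, hincr⟩
      · exact Or.inl (hrest k hkk₀)
  have hsum : ∀ t : ℕ, ∑ l ∈ K, (n t l : ℝ) = ∑ l ∈ K, (t : ℝ) * ξ l / S := by
    intro t
    rw [← sum_div, ← mul_sum, ← hS, mul_div_cancel_right₀ _ hSpos.ne']
    exact_mod_cast sum_eq_of_increments_one K n (fun k _ => h0 k)
      (fun t => (hstep t).imp fun _ ⟨hk, _, hrest⟩ => ⟨hk, hrest⟩) t
  intro t k hk
  have lower := sub_card_sub_one_mul_le_of_sum_eq K _ _ 1 (upper t) (hsum t) hk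
  rw [hcard] at lower
  exact ⟨by linarith, upper t k hk⟩

theorem stmt_3 {ι : Type*} (K : Finset ι) (ρ : ℕ) (hρ : 1 ≤ ρ) (hcard : K.card = ρ)
    (ξ : ι → ℝ) (hξ : ∀ k ∈ K, 0 ≤ ξ k)
    (S : ℝ) (hS : S = ∑ k ∈ K, ξ k) (hSpos : 0 < S)
    (n : ℕ → ι → ℕ) (h0 : ∀ k, n 0 k = 0)
    (hstep : ∀ t : ℕ, ∃ k ∈ K, (n t k : ℝ) ≤ (t : ℝ) * ξ k / S ∧
      n (t + 1) k = n t k + 1 ∧ ∀ l, l ≠ k → n (t + 1) l = n t l) :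
    ∀ t : ℕ, ∀ k ∈ K, (t : ℝ) * ξ k / S - ρ ≤ n t k ∧ (n t k : ℝ) ≤ (t : ℝ) * ξ k / S + 1 :=
  stmt_3_general K ρ hcard ξ hξ S hS hSpos n h0 hstep
end
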